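/- Let (G,q) be a finite abelian group of odd order with quadratic form q whose associated bilinear form ∂q is non-degenerate. Then for every k ≥ 1, the Gauss sum Θ(F_k(G), F_k(q)) is nonzero, and in fact |Θ(F_k(G), F_k(q))| = |G[k]|^{1/2}, where G[k] = {x ∈ G : kx = 0}. -/

import Mathlib

/-!
For a function `Q` on a finite abelian group `H` whose polar form
`Q (x + y) - Q x - Q y` is biadditive modulo `ℤ`, writing `e r = exp (2πir)`, the substitution
`x = y + h` gives `|∑ₓ e (Q x)|² = |H| · ∑ₕ e (Q h)`, where `h` runs over the radical of the
polar form. Take `H = F_k(G)` and `Q = F_k(q)`. Testing against `(…, y, …, -y, …) ∈ F_k(G)` and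
using non-degeneracy of `∂q` shows that the radical consists of the constant tuples `(c, …, c)`
with `k • c = 0`. On these, `F_k(q) = k q(c)` is an integer because the order of `c` is odd.
Hence `|Θ|² = |F_k(G)| · |G[k]| / |G|^{k-1} = |G[k]|`.
-/

open Classical

open QuadraticMap (polar)

lemma AddChar.map_sum_eq_prod {ι A M : Type*} [AddCommMonoid A] [CommMonoid M]
    (ψ : AddChar A M) (s : Finset ι) (f : ι → A) : ψ (∑ i ∈ s, f i) = ∏ i ∈ s, ψ (f i) := by
  induction s using Finset.induction_on with
  | empty => simp
  | insert a s ha ih => rw [Finset.sum_insert ha, Finset.prod_insert ha, map_add_eq_mul, ih]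

/-- Since `e r` only depends on `r mod ℤ`, `ℚ/ℤ`-valued forms are handled through their lifts
to `ℚ`. -/
noncomputable def e : AddChar ℚ ℂ where
  toFun r := Complex.exp (2 * Real.pi * Complex.I * r)
  map_zero_eq_one' := by simp
  map_add_eq_mul' a b := by push_cast; rw [mul_add, Complex.exp_add]

lemma e_apply (r : ℚ) : e r = Complex.exp (2 * Real.pi * Complex.I * r) := rfl

lemma e_ne_zero (r : ℚ) : e r ≠ 0 := Complex.exp_ne_zero _

lemma e_eq_one_iff {r : ℚ} : e r = 1 ↔ ∃ n : ℤ, r = n := by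
  rw [e_apply, Complex.exp_eq_one_iff]
  refine exists_congr fun n => ?_
  rw [mul_comm _ (r : ℂ), mul_left_inj' (by simp [Real.pi_ne_zero])]
  exact_mod_cast Iff.rfl

lemma e_eq_iff {r s : ℚ} : e r = e s ↔ ∃ n : ℤ, r = s + n := by
  rw [← div_eq_one_iff_eq (e_ne_zero s), ← AddChar.map_sub_eq_div, e_eq_one_iff]
  simp only [sub_eq_iff_eq_add']

lemma norm_e (r : ℚ) : ‖e r‖ = 1 := by
  simp [e_apply, Complex.norm_exp]

lemma conj_e (r : ℚ) : starRingEnd ℂ (e r) = e (-r) := by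
  rw [AddChar.map_neg_eq_inv, RCLike.inv_eq_conj (norm_e r)]

lemma polar_sum_apply {ι H : Type*} [Fintype ι] [AddCommGroup H] (Q : H → ℚ) (x y : ι → H) :
    polar (fun x : ι → H => ∑ i, Q (x i)) x y = ∑ i, polar Q (x i) (y i) := by
  simp only [QuadraticMap.polar, Pi.add_apply, Finset.sum_sub_distrib]

/-- Since `polar Q` is symmetric, this says that it is biadditive modulo `ℤ`. -/
def IsQuadraticModInt {H : Type*} [AddCommGroup H] (Q : H → ℚ) : Prop :=
  ∀ x y z, e (polar Q (x + y) z) = e (polar Q x z) * e (polar Q y z)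

namespace IsQuadraticModInt

variable {ι H K : Type*} [Fintype ι] [AddCommGroup H] [AddCommGroup K] {Q : H → ℚ}

lemma of_exists_int (h : ∀ x y z, ∃ n : ℤ, polar Q (x + y) z = polar Q x z + polar Q y z + n) :
    IsQuadraticModInt Q := fun x y z => by
  rw [← AddChar.map_add_eq_mul]
  exact e_eq_iff.mpr (h x y z)

noncomputable def polarChar (hQ : IsQuadraticModInt Q) (z : H) : AddChar H ℂ where
  toFun x := e (polar Q x z)
  map_zero_eq_one' := by
    have h := hQ 0 0 z
    rw [add_zero] at h
    exact (mul_eq_left₀ (e_ne_zero _)).mp h.symm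
  map_add_eq_mul' x y := hQ x y z

variable (hQ : IsQuadraticModInt Q)
include hQ

lemma polarChar_apply (x z : H) : hQ.polarChar z x = e (polar Q x z) := rfl

lemma polarChar_ne_zero (z x : H) : hQ.polarChar z x ≠ 0 := e_ne_zero _

lemma polarChar_comm (x z : H) : hQ.polarChar z x = hQ.polarChar x z := by
  rw [polarChar_apply, polarChar_apply, QuadraticMap.polar_comm]

open ComplexConjugate in
theorem sum_mul_conj [Fintype H] :
    (∑ x, e (Q x)) * conj (∑ x, e (Q x)) =
      Fintype.card H * ∑ h with hQ.polarChar h = 0, e (Q h) := by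
  have shift (y h : H) : e (Q (y + h)) * e (-Q y) = e (Q h) * hQ.polarChar h y := by
    rw [polarChar_apply, ← AddChar.map_add_eq_mul, ← AddChar.map_add_eq_mul, QuadraticMap.polar]
    ring_nf
  calc (∑ x, e (Q x)) * conj (∑ x, e (Q x))
      = ∑ y, ∑ x, e (Q x) * e (-Q y) := by
        simp only [map_sum, conj_e, Finset.sum_mul_sum]
        exact Finset.sum_comm
    _ = ∑ y, ∑ h, e (Q h) * hQ.polarChar h y := by
        refine Finset.sum_congr rfl fun y _ => ?_
        rw [← Fintype.sum_equiv (Equiv.addLeft y) _ _ fun _ => rfl]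
        simp only [Equiv.coe_addLeft, shift]
    _ = ∑ h, e (Q h) * if hQ.polarChar h = 0 then (Fintype.card H : ℂ) else 0 := by
        rw [Finset.sum_comm]
        simp only [← Finset.mul_sum, AddChar.sum_eq_ite]
    _ = Fintype.card H * ∑ h with hQ.polarChar h = 0, e (Q h) := by
        rw [Finset.sum_filter, Finset.mul_sum]
        simp only [mul_ite, mul_zero, ite_mul, zero_mul, mul_comm]

lemma e_map_zero : e (Q 0) = 1 := by
  have h : hQ.polarChar 0 0 = 1 := AddChar.map_zero_eq_one _
  rwa [polarChar_apply, QuadraticMap.polar, zero_add, sub_self, zero_sub, AddChar.map_neg_eq_inv,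
    inv_eq_one] at h

lemma e_map_nsmul (c : H) (n : ℕ) :
    e (Q (n • c)) = e (Q c) ^ n * hQ.polarChar c c ^ n.choose 2 := by
  induction n with
  | zero => simp [hQ.e_map_zero]
  | succ n ih =>
    have hsplit : Q ((n + 1) • c) = Q (n • c) + Q c + polar Q (n • c) c := by
      rw [succ_nsmul, QuadraticMap.polar]
      ring
    rw [hsplit, AddChar.map_add_eq_mul, AddChar.map_add_eq_mul, ih, ← hQ.polarChar_apply,
      AddChar.map_nsmul_eq_pow, Nat.choose_succ_succ', Nat.choose_one_right]
    ring

lemma e_natCast_mul_eq_one [Finite H] (hodd : Odd (Nat.card H)) {n : ℕ} {c : H}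
    (hc : n • c = 0) : e (n * Q c) = 1 := by
  obtain ⟨a, ha⟩ : Odd (addOrderOf c) := hodd.of_dvd_nat (addOrderOf_dvd_natCard c)
  -- the point where odd order is needed
  have hchoose : (addOrderOf c).choose 2 = addOrderOf c * a := by
    rw [Nat.choose_two_right, ha, Nat.add_sub_cancel, mul_left_comm,
      Nat.mul_div_cancel_left _ two_pos]
  have horder : e (Q c) ^ addOrderOf c = 1 := by
    have h := hQ.e_map_nsmul c (addOrderOf c)
    rwa [addOrderOf_nsmul_eq_zero, hQ.e_map_zero, hchoose, pow_mul,
      ← (hQ.polarChar c).map_nsmul_eq_pow, addOrderOf_nsmul_eq_zero, AddChar.map_zero_eq_one,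
      one_pow, mul_one, eq_comm] at h
  obtain ⟨d, rfl⟩ := addOrderOf_dvd_of_nsmul_eq_zero hc
  rw [← nsmul_eq_mul, AddChar.map_nsmul_eq_pow, pow_mul, horder, one_pow]

lemma comp (f : K →+ H) : IsQuadraticModInt (Q ∘ f) := fun x y z => by
  simpa only [QuadraticMap.polar, Function.comp_apply, map_add] using hQ (f x) (f y) (f z)

lemma pi : IsQuadraticModInt (fun x : ι → H => ∑ i, Q (x i)) := fun x y z => by
  simp only [polar_sum_apply, AddChar.map_sum_eq_prod, Pi.add_apply, hQ _ _ _,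
    Finset.prod_mul_distrib]

lemma polarChar_pi_apply (z x : ι → H) :
    (hQ.pi (ι := ι)).polarChar z x = ∏ i, hQ.polarChar (z i) (x i) := by
  simp only [polarChar_apply, polar_sum_apply, AddChar.map_sum_eq_prod]

lemma polarChar_pi_single [DecidableEq ι] (z : ι → H) (i : ι) (y : H) :
    hQ.pi.polarChar z (Pi.single i y) = hQ.polarChar (z i) y := by
  rw [polarChar_pi_apply, Finset.prod_eq_single i
    (fun j _ hj => by rw [Pi.single_eq_of_ne hj, AddChar.map_zero_eq_one]) (by simp),
    Pi.single_eq_same]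

end IsQuadraticModInt

/-- `F_k(G)` of the paper, for an arbitrary finite index type in place of `Fin k`. -/
def zeroSumSubgroup (ι G : Type*) [Fintype ι] [AddCommGroup G] : AddSubgroup (ι → G) :=
  (∑ i, Pi.evalAddMonoidHom (fun _ : ι => G) i).ker

section ZeroSum

variable {ι G : Type*} [Fintype ι] [AddCommGroup G]

lemma mem_zeroSumSubgroup {x : ι → G} : x ∈ zeroSumSubgroup ι G ↔ ∑ i, x i = 0 := by
  simp [zeroSumSubgroup, AddMonoidHom.mem_ker]

lemma card_zeroSumSubgroup [Nonempty ι] [Finite G] :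
    Nat.card (zeroSumSubgroup ι G) = Nat.card G ^ (Fintype.card ι - 1) := by
  obtain ⟨i⟩ := ‹Nonempty ι›
  have hsurj : Function.Surjective ⇑(∑ i, Pi.evalAddMonoidHom (fun _ : ι => G) i) :=
    fun c => ⟨Pi.single i c, by simp⟩
  have h := (zeroSumSubgroup ι G).card_mul_index
  obtain ⟨n, hn⟩ := Nat.exists_eq_succ_of_ne_zero (Fintype.card_ne_zero (α := ι))
  rw [zeroSumSubgroup, AddSubgroup.index_ker, AddMonoidHom.range_eq_top.mpr hsurj,
    AddSubgroup.card_top, Nat.card_fun, Nat.card_eq_fintype_card (α := ι), hn, pow_succ] at h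
  rw [hn, Nat.succ_sub_one]
  exact Nat.eq_of_mul_eq_mul_right Nat.card_pos h

/-- `F_k(q)` of the paper. -/
def zeroSumForm (q : G → ℚ) (x : zeroSumSubgroup ι G) : ℚ := ∑ i, q (x.1 i)

variable {q : G → ℚ} (hq : IsQuadraticModInt q)
include hq

variable (ι) in
lemma IsQuadraticModInt.zeroSumForm : IsQuadraticModInt (zeroSumForm (ι := ι) q) :=
  hq.pi.comp (zeroSumSubgroup ι G).subtype

lemma polarChar_zeroSumForm_apply (z x : zeroSumSubgroup ι G) :
    (hq.zeroSumForm ι).polarChar z x = hq.pi.polarChar z.1 x.1 := by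
  simp only [IsQuadraticModInt.polarChar_apply, QuadraticMap.polar, zeroSumForm,
    AddSubgroup.coe_add, Pi.add_apply]

lemma polarChar_zeroSumForm_eq_zero_iff (hnd : ∀ z, hq.polarChar z = 0 → z = 0)
    (h : zeroSumSubgroup ι G) :
    (hq.zeroSumForm ι).polarChar h = 0 ↔ ∀ i j, h.1 i = h.1 j := by
  constructor
  · intro hrad i j
    rw [← sub_eq_zero]
    refine hnd _ (AddChar.eq_zero_iff.mpr fun y => ?_)
    have hy : Pi.single i y - Pi.single j y ∈ zeroSumSubgroup ι G := by
      simp [mem_zeroSumSubgroup, Finset.sum_sub_distrib]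
    have hij := DFunLike.congr_fun hrad ⟨_, hy⟩
    rw [polarChar_zeroSumForm_apply hq, AddChar.map_sub_eq_div,
      hq.polarChar_pi_single, hq.polarChar_pi_single, AddChar.zero_apply,
      div_eq_one_iff_eq (hq.polarChar_ne_zero _ _)] at hij
    rw [hq.polarChar_comm, AddChar.map_sub_eq_div, hq.polarChar_comm (h.1 i),
      hq.polarChar_comm (h.1 j), hij, div_self (hq.polarChar_ne_zero _ _)]
  · intro hconst
    refine AddChar.eq_zero_iff.mpr fun x => ?_
    rw [polarChar_zeroSumForm_apply hq, hq.polarChar_pi_apply]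
    rcases isEmpty_or_nonempty ι with hι | ⟨⟨i₀⟩⟩
    · simp
    · simp only [hconst _ i₀, ← AddChar.map_sum_eq_prod, mem_zeroSumSubgroup.mp x.2,
        AddChar.map_zero_eq_one]

variable [DecidableEq ι]

lemma sum_e_zeroSumForm_radical [Nonempty ι] [Fintype G] (hodd : Odd (Fintype.card G))
    (hnd : ∀ z, hq.polarChar z = 0 → z = 0) :
    ∑ h with (hq.zeroSumForm ι).polarChar h = 0, e (zeroSumForm q h) =
      Fintype.card {c : G // Fintype.card ι • c = 0} := by
  obtain ⟨i₀⟩ := ‹Nonempty ι›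
  let diag : {c : G // Fintype.card ι • c = 0} ↪ zeroSumSubgroup ι G :=
    ⟨fun c => ⟨fun _ => c.1, by simp [mem_zeroSumSubgroup, c.2]⟩,
      fun c d hcd => Subtype.ext (congr_fun (congrArg Subtype.val hcd) i₀)⟩
  have hradical : Finset.univ.filter (fun h => (hq.zeroSumForm ι).polarChar h = 0) =
      Finset.univ.map diag := by
    ext h
    simp only [Finset.mem_filter, Finset.mem_univ, true_and, Finset.mem_map,
      polarChar_zeroSumForm_eq_zero_iff hq hnd]
    constructor
    · intro hconst
      refine ⟨⟨h.1 i₀, ?_⟩, Subtype.ext (funext fun i => hconst i₀ i)⟩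
      rw [← Finset.card_univ, ← Finset.sum_const, Finset.sum_congr rfl fun i _ => hconst i₀ i]
      exact mem_zeroSumSubgroup.mp h.2
    · rintro ⟨c, -, rfl⟩ i j
      rfl
  have hterm (c : {c : G // Fintype.card ι • c = 0}) : e (zeroSumForm q (diag c)) = 1 := by
    change e (∑ _i : ι, q c.1) = 1
    rw [Finset.sum_const, Finset.card_univ, nsmul_eq_mul]
    exact hq.e_natCast_mul_eq_one (Nat.card_eq_fintype_card (α := G) ▸ hodd) c.2
  rw [hradical, Finset.sum_map, Finset.sum_congr rfl fun c _ => hterm c]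
  simp

theorem norm_sum_e_zeroSumForm_sq [Nonempty ι] [Fintype G] (hodd : Odd (Fintype.card G))
    (hnd : ∀ z, hq.polarChar z = 0 → z = 0) :
    ‖∑ x : zeroSumSubgroup ι G, e (zeroSumForm q x)‖ ^ 2 =
      Fintype.card G ^ (Fintype.card ι - 1) * Fintype.card {c : G // Fintype.card ι • c = 0} := by
  have h := (hq.zeroSumForm ι).sum_mul_conj
  rw [Complex.mul_conj, Complex.normSq_eq_norm_sq, sum_e_zeroSumForm_radical hq hodd hnd,
    Fintype.card_eq_nat_card, card_zeroSumSubgroup, Nat.card_eq_fintype_card] at h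
  exact_mod_cast h

end ZeroSum

lemma norm_inv_sqrt_mul_eq_sqrt {S : ℂ} {A T : ℝ} (hA : 0 < A) (hS : ‖S‖ ^ 2 = A * T) :
    ‖(Real.sqrt A : ℂ)⁻¹ * S‖ = Real.sqrt T := by
  have hnorm : ‖S‖ = Real.sqrt A * Real.sqrt T := by
    rw [← Real.sqrt_mul hA.le, ← hS, Real.sqrt_sq (norm_nonneg S)]
  rw [norm_mul, norm_inv, Complex.norm_real, Real.norm_of_nonneg (Real.sqrt_nonneg A), hnorm,
    inv_mul_cancel_left₀ (Real.sqrt_pos.mpr hA).ne']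

theorem stmt15_general {G : Type*} [AddCommGroup G] [Fintype G]
    (hodd : Odd (Fintype.card G))
    -- `q` is a rational-valued lift of a `ℚ/ℤ`-valued quadratic form:
    (q : G → ℚ)
    (hq_bilin : ∀ x y z : G, ∃ n : ℤ,
      (q (x + z + y) - q (x + z) - q y)
        = (q (x + y) - q x - q y) + (q (z + y) - q z - q y) + n)
    (hnd : ∀ x : G, (∀ y : G, ∃ n : ℤ, q (x + y) - q x - q y = n) → x = 0)
    (k : ℕ) (hk : 1 ≤ k) :
    ((Real.sqrt ((Fintype.card G : ℝ) ^ (k - 1)) : ℂ)⁻¹ *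
        ∑ x ∈ Finset.univ.filter (fun x : Fin k → G => ∑ i, x i = 0),
          Complex.exp (2 * Real.pi * Complex.I * ((∑ i, q (x i) : ℚ) : ℂ))) ≠ 0 ∧
    ‖(Real.sqrt ((Fintype.card G : ℝ) ^ (k - 1)) : ℂ)⁻¹ *
        ∑ x ∈ Finset.univ.filter (fun x : Fin k → G => ∑ i, x i = 0),
          Complex.exp (2 * Real.pi * Complex.I * ((∑ i, q (x i) : ℚ) : ℂ))‖
      = Real.sqrt (Fintype.card {x : G // k • x = 0}) := by
  have hq : IsQuadraticModInt q := .of_exists_int fun x y z => hq_bilin x z y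
  have hq_nd (z : G) (hz : hq.polarChar z = 0) : z = 0 := hnd z fun y => by
    obtain ⟨n, hn⟩ := e_eq_one_iff.mp (AddChar.eq_zero_iff.mp hz y)
    exact ⟨n, by rw [← hn, QuadraticMap.polar_comm]; rfl⟩
  have : Nonempty (Fin k) := ⟨⟨0, hk⟩⟩
  have hsum : ∑ x ∈ Finset.univ.filter (fun x : Fin k → G => ∑ i, x i = 0),
      Complex.exp (2 * Real.pi * Complex.I * ((∑ i, q (x i) : ℚ) : ℂ)) =
      ∑ x : zeroSumSubgroup (Fin k) G, e (zeroSumForm q x) :=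
    Finset.sum_subtype _ (fun x => by simp [mem_zeroSumSubgroup]) _
  have hnorm := norm_sum_e_zeroSumForm_sq (ι := Fin k) hq hodd hq_nd
  rw [Fintype.card_fin] at hnorm
  have hT : (0 : ℝ) < Fintype.card {x : G // k • x = 0} :=
    Nat.cast_pos.mpr (Fintype.card_pos_iff.mpr ⟨⟨0, smul_zero k⟩⟩)
  have hmain := norm_inv_sqrt_mul_eq_sqrt (pow_pos (Nat.cast_pos.mpr Fintype.card_pos) _) hnorm
  rw [← hsum] at hmain
  exact ⟨norm_ne_zero_iff.mp (hmain ▸ (Real.sqrt_pos.mpr hT).ne'), hmain⟩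

theorem stmt15 {G : Type*} [AddCommGroup G] [Fintype G]
    (hodd : Odd (Fintype.card G))
    -- `q` is a rational-valued lift of a `ℚ/ℤ`-valued quadratic form:
    (q : G → ℚ)
    (hq_even : ∀ x : G, ∃ n : ℤ, q (-x) = q x + n)
    (hq_bilin : ∀ x y z : G, ∃ n : ℤ,
      (q (x + z + y) - q (x + z) - q y)
        = (q (x + y) - q x - q y) + (q (z + y) - q z - q y) + n)
    (hnd : ∀ x : G, (∀ y : G, ∃ n : ℤ, q (x + y) - q x - q y = n) → x = 0)
    (k : ℕ) (hk : 1 ≤ k) :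
    ((Real.sqrt ((Fintype.card G : ℝ) ^ (k - 1)) : ℂ)⁻¹ *
        ∑ x ∈ Finset.univ.filter (fun x : Fin k → G => ∑ i, x i = 0),
          Complex.exp (2 * Real.pi * Complex.I * ((∑ i, q (x i) : ℚ) : ℂ))) ≠ 0 ∧
    ‖(Real.sqrt ((Fintype.card G : ℝ) ^ (k - 1)) : ℂ)⁻¹ *
        ∑ x ∈ Finset.univ.filter (fun x : Fin k → G => ∑ i, x i = 0),
          Complex.exp (2 * Real.pi * Complex.I * ((∑ i, q (x i) : ℚ) : ℂ))‖
      = Real.sqrt (Fintype.card {x : G // k • x = 0}) :=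
  stmt15_general hodd q hq_bilin hnd k hk
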